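/- arXiv:1104.0059 — 4 statements merged into one kernel-verified Lean document; each statement's English description precedes it below -/
import Mathlib

section
/- Let X = {X(t), t ∈ ℝ^d} be a stochastically continuous and proper random field with values in ℝ^m which is wide-sense operator-self-similar with time-variable scaling exponent E ∈ Q(ℝ^d), and let D ∈ M(ℝ^m) and the continuous function b_r(t) be such that {X(r^E t), t ∈ ℝ^d} ≡fdd {r^D X(t) + b_r(t), t ∈ ℝ^d} for all r > 0. Then X(0) = a almost surely for some constant vector a ∈ ℝ^m if and only if D ∈ Q(ℝ^m). In the latter case, defining b_0(t) ≡ a for all t ∈ ℝ^d, the function (r,t) ↦ b_r(t) is continuous on [0,∞)×ℝ^d. -/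
/-!
Write `r^D` for `mpow r D`. The one-dimensional marginals of the scaling relation say that
`X (r^E t)` has the law of `r^D X t + b r t`.

If `D ∈ Q`, then `r^D → 0` as `r → 0+`: on each generalized eigenspace of the complexification,
`exp (s D) v` is `exp (s μ)` times a polynomial in `s`. At `t = 0` this makes `X 0 - b r 0` tend
to `0` in probability, which forces `X 0` to be a.s. constant. Near `(0, t₀)`, stochastic
continuity gives `X (r^E t) → X 0 = a` and `r^D X t → 0` in probability, hence `b r t → a`.

If `D ∉ Q`, then, since `D ∈ M`, it has an eigenvalue `iθ`. The real or imaginary part `y` of a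
left eigenvector is fixed by `r^D` along `r_k = exp (-2πk/|θ|) → 0`. So `⟨X t₀, y⟩ + ⟨b r_k t₀, y⟩`
has the law of `⟨X (r_k^E t₀), y⟩ → ⟨a, y⟩`, which makes `⟨X t₀, y⟩` a.s. constant and
contradicts properness.
-/

open MeasureTheory Filter Matrix Topology Set
open scoped ENNReal NNReal

/-- `mpow r A` is `r^A := exp((ln r) A)` for `r > 0` and a real square matrix `A`. -/
noncomputable def mpow {n : ℕ} (r : ℝ) (A : Matrix (Fin n) (Fin n) ℝ) :
    Matrix (Fin n) (Fin n) ℝ :=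
  NormedSpace.exp (Real.log r • A)

/-- The set of (complex) eigenvalues of a real square matrix. -/
def matSpectrum {n : ℕ} (A : Matrix (Fin n) (Fin n) ℝ) : Set ℂ :=
  spectrum ℂ (A.map (Complex.ofReal))

/-- `QSet n` is `Q(ℝⁿ)`: matrices whose eigenvalues all have positive real part. -/
def QSet (n : ℕ) : Set (Matrix (Fin n) (Fin n) ℝ) :=
  {A | ∀ μ ∈ matSpectrum A, 0 < μ.re}

/-- `MSet n` is `M(ℝⁿ)`: matrices whose eigenvalues all have nonnegative real part and
such that every eigenvalue with zero real part is a simple root of the minimal polynomial. -/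
def MSet (n : ℕ) : Set (Matrix (Fin n) (Fin n) ℝ) :=
  {A | ∀ μ ∈ matSpectrum A, 0 ≤ μ.re ∧
    (μ.re = 0 → (minpoly ℂ (A.map (Complex.ofReal))).rootMultiplicity μ = 1)}

/-- Equality of all finite-dimensional distributions of two random fields. -/
def IdentFDD {Ω T β : Type*} [MeasurableSpace Ω] [MeasurableSpace β]
    (P : Measure Ω) (Y Z : T → Ω → β) : Prop :=
  ∀ (k : ℕ) (t : Fin k → T),
    P.map (fun ω i => Y (t i) ω) = P.map (fun ω i => Z (t i) ω)

/-- Stochastic continuity: `X s → X t` in probability whenever `s → t`. -/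
def StochContinuous {Ω : Type*} [MeasurableSpace Ω] (P : Measure Ω) {d m : ℕ}
    (X : (Fin d → ℝ) → Ω → (Fin m → ℝ)) : Prop :=
  ∀ (t : Fin d → ℝ), ∀ ε > (0 : ℝ),
    Tendsto (fun s => P {ω | ε ≤ dist (X s ω) (X t ω)}) (𝓝 t) (𝓝 0)

/-- A distribution on `ℝ^m` is full if its support is not contained in any proper
hyperplane; equivalently, it does not give full mass to any hyperplane. -/
def IsFullMeasure {m : ℕ} (μ : Measure (Fin m → ℝ)) : Prop :=
  ∀ (y : Fin m → ℝ), y ≠ 0 → ∀ c : ℝ, μ {x | ∑ i, x i * y i = c} ≠ 1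

/-- A random field is proper if the distribution of `X t` is full for every `t ≠ 0`. -/
def ProperField {Ω : Type*} [MeasurableSpace Ω] (P : Measure Ω) {d m : ℕ}
    (X : (Fin d → ℝ) → Ω → (Fin m → ℝ)) : Prop :=
  ∀ t : Fin d → ℝ, t ≠ 0 → IsFullMeasure (P.map (X t))

/-- Wide-sense operator-self-similarity with time-variable scaling exponent `E`. -/
def WOSS {Ω : Type*} [MeasurableSpace Ω] (P : Measure Ω) {d m : ℕ}
    (X : (Fin d → ℝ) → Ω → (Fin m → ℝ)) (E : Matrix (Fin d) (Fin d) ℝ) : Prop :=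
  ∀ r : ℝ, 0 < r → ∃ (B : Matrix (Fin m) (Fin m) ℝ) (a : (Fin d → ℝ) → (Fin m → ℝ)),
    IdentFDD P (fun t ω => X (mpow r E *ᵥ t) ω) (fun t ω => B *ᵥ X t ω + a t)

/-- The operator norm `max_{|x|=1} |Q x|` (Euclidean norms) of a matrix. -/
noncomputable def opNorm {n m : ℕ} (Q : Matrix (Fin m) (Fin n) ℝ) : ℝ :=
  ‖LinearMap.toContinuousLinearMap (Matrix.toEuclideanLin Q)‖

/-- The Euclidean norm of a vector in `ℝ^n`. -/
noncomputable def euclNorm {n : ℕ} (v : Fin n → ℝ) : ℝ :=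
  Real.sqrt (∑ i, v i ^ 2)

/-- `G_r`: invertible matrices `A` such that `{X(r^E t)} ≡fdd {A X(t) + b(t)}`
for some deterministic function `b : ℝ^d → ℝ^m`. -/
def GSet {Ω : Type*} [MeasurableSpace Ω] (P : Measure Ω) {d m : ℕ}
    (X : (Fin d → ℝ) → Ω → (Fin m → ℝ)) (E : Matrix (Fin d) (Fin d) ℝ)
    (r : ℝ) : Set (Matrix (Fin m) (Fin m) ℝ) :=
  {A | IsUnit A ∧ ∃ b : (Fin d → ℝ) → (Fin m → ℝ),
    IdentFDD P (fun t ω => X (mpow r E *ᵥ t) ω) (fun t ω => A *ᵥ X t ω + b t)}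

/-- `G = ⋃_{r>0} G_r`. -/
def GAll {Ω : Type*} [MeasurableSpace Ω] (P : Measure Ω) {d m : ℕ}
    (X : (Fin d → ℝ) → Ω → (Fin m → ℝ)) (E : Matrix (Fin d) (Fin d) ℝ) :
    Set (Matrix (Fin m) (Fin m) ℝ) :=
  ⋃ r ∈ Set.Ioi (0 : ℝ), GSet P X E r

/-- A radial part `τ` under the operator `E`. -/
structure IsRadialPart {d : ℕ} (E : Matrix (Fin d) (Fin d) ℝ)
    (τ : (Fin d → ℝ) → ℝ) : Prop where
  continuous : Continuous τ
  nonneg : ∀ x, 0 ≤ τ x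
  pos : ∀ x : Fin d → ℝ, x ≠ 0 → 0 < τ x
  map_zero : τ 0 = 0
  even : ∀ x, τ (-x) = τ x
  scaling : ∀ r : ℝ, 0 < r → ∀ x, τ (mpow r E *ᵥ x) = r * τ x
  isCompact_sphere : IsCompact {x | τ x = 1}
  zero_not_mem : (0 : Fin d → ℝ) ∉ {x | τ x = 1}
  tendsto_atTop : ∀ M : ℝ, ∃ R : ℝ, ∀ x : Fin d → ℝ, R ≤ ‖x‖ → M ≤ τ x
  tendsto_zero : Tendsto τ (𝓝 0) (𝓝 0)

/-- `φ` is `E`-homogeneous: `φ(r^E x) = r φ(x)` for all `r > 0` and `x ≠ 0`. -/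
def EHomogeneous {d : ℕ} (E : Matrix (Fin d) (Fin d) ℝ)
    (φ : (Fin d → ℝ) → ℝ) : Prop :=
  ∀ r : ℝ, 0 < r → ∀ x : Fin d → ℝ, x ≠ 0 → φ (mpow r E *ᵥ x) = r * φ x

/-- `ψ` is `(β,E)`-admissible with respect to the radial part `τ`. -/
def Admissible {d : ℕ} (τ : (Fin d → ℝ) → ℝ) (β : ℝ)
    (ψ : (Fin d → ℝ) → ℝ) : Prop :=
  (∀ x : Fin d → ℝ, x ≠ 0 → 0 < ψ x) ∧
  ∀ A B : ℝ, 0 < A → A < B → ∃ C : ℝ, 0 < C ∧ ∀ y : Fin d → ℝ,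
    A ≤ euclNorm y → euclNorm y ≤ B → ∀ x : Fin d → ℝ, τ x ≤ 1 →
      |ψ (x + y) - ψ y| ≤ C * τ x ^ β

theorem tendsto_cexp_mul_mul_pow_atTop {μ : ℂ} (hμ : μ.re < 0) (j : ℕ) :
    Tendsto (fun s : ℝ => Complex.exp (s * μ) * (s : ℂ) ^ j) atTop (𝓝 0) := by
  rw [tendsto_zero_iff_norm_tendsto_zero]
  refine (tendsto_rpow_mul_exp_neg_mul_atTop_nhds_zero j (-μ.re) (neg_pos.mpr hμ)).congr' ?_
  filter_upwards [eventually_ge_atTop 0] with s hs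
  simp [Complex.norm_exp, abs_of_nonneg hs, mul_comm]

open Real in
theorem exists_pos_cexp_mul_eq_one {μ : ℂ} (hre : μ.re = 0) :
    ∃ p : ℝ, 0 < p ∧ Complex.exp (p * μ) = 1 := by
  obtain ⟨θ, rfl⟩ : ∃ θ : ℝ, μ = θ * Complex.I := ⟨μ.im, Complex.ext (by simp [hre]) (by simp)⟩
  rcases eq_or_ne θ 0 with rfl | hθ
  · exact ⟨1, one_pos, by simp⟩
  have hθ' : (θ : ℂ) ≠ 0 := Complex.ofReal_ne_zero.mpr hθ
  refine ⟨2 * π / |θ|, by positivity, Complex.exp_eq_one_iff.mpr ?_⟩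
  rcases abs_choice θ with h | h
  · exact ⟨1, by rw [h]; push_cast; field_simp⟩
  · exact ⟨-1, by rw [h]; push_cast; field_simp⟩

namespace Matrix

section

open NormedSpace

variable {ι : Type*} [Fintype ι]

theorem re_map_ofReal_mulVec (B : Matrix ι ι ℝ) (v : ι → ℂ) :
    (fun i => (B.map Complex.ofReal *ᵥ v) i |>.re) = B *ᵥ fun i => (v i).re := by
  ext i
  simp [mulVec, dotProduct, Complex.re_sum]

theorem im_map_ofReal_mulVec (B : Matrix ι ι ℝ) (v : ι → ℂ) :
    (fun i => (B.map Complex.ofReal *ᵥ v) i |>.im) = B *ᵥ fun i => (v i).im := by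
  ext i
  simp [mulVec, dotProduct, Complex.im_sum]

variable [DecidableEq ι]

theorem exp_algebraMap (μ : ℂ) :
    exp (algebraMap ℂ (Matrix ι ι ℂ) μ) = algebraMap ℂ _ (Complex.exp μ) := by
  rw [Complex.exp_eq_exp_ℂ]
  exact (open scoped Norms.Operator in algebraMap_exp_comm (𝔸 := Matrix ι ι ℂ) μ).symm

theorem exp_mulVec_of_pow_sub_mulVec_eq_zero (M : Matrix ι ι ℂ) (μ : ℂ) {k : ℕ} {x : ι → ℂ}
    (hx : (M - μ • 1) ^ k *ᵥ x = 0) :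
    exp M *ᵥ x = Complex.exp μ •
      ∑ j ∈ Finset.range k, ((j.factorial : ℂ)⁻¹ • ((M - μ • 1) ^ j *ᵥ x)) := by
  set N := M - μ • 1
  have hsplit : M = algebraMap ℂ _ μ + N := by
    rw [Algebra.algebraMap_eq_smul_one, add_sub_cancel]
  have hN : exp N *ᵥ x = ∑ j ∈ Finset.range k, ((j.factorial : ℂ)⁻¹ • (N ^ j *ᵥ x)) := by
    -- Summability depends only on the topology, so any matrix norm may be used to prove it.
    have hs : Summable fun n : ℕ => (n.factorial : ℂ)⁻¹ • N ^ n :=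
      open scoped Norms.Operator in expSeries_summable' N
    rw [exp_eq_tsum ℂ]
    change mulVec.addMonoidHomLeft x (∑' n : ℕ, _) = _
    rw [← (hs.hasSum.map (mulVec.addMonoidHomLeft x)
      (continuous_id.matrix_mulVec continuous_const)).tsum_eq,
      tsum_eq_sum (s := Finset.range k) fun j hj => ?_]
    · exact Finset.sum_congr rfl fun j _ => smul_mulVec _ _ _
    obtain ⟨i, rfl⟩ := Nat.exists_eq_add_of_le' (by simpa using hj : k ≤ j)
    change ((_ : ℂ) • (N ^ (i + k))) *ᵥ x = 0
    rw [smul_mulVec, pow_add, ← mulVec_mulVec, hx, mulVec_zero, smul_zero]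
  rw [hsplit, exp_add_of_commute _ _ (Algebra.commute_algebraMap_left μ N), ← hN,
    exp_algebraMap, Algebra.algebraMap_eq_smul_one, smul_mul_assoc, one_mul, smul_mulVec]

theorem exp_mulVec_of_mulVec_eq_smul {M : Matrix ι ι ℂ} {μ : ℂ} {x : ι → ℂ}
    (hx : M *ᵥ x = μ • x) : exp M *ᵥ x = Complex.exp μ • x := by
  have h1 : (M - μ • 1) ^ 1 *ᵥ x = 0 := by
    rw [pow_one, sub_mulVec, smul_mulVec, one_mulVec, hx, sub_self]
  simpa using exp_mulVec_of_pow_sub_mulVec_eq_zero M μ h1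

theorem spectrum_transpose {K : Type*} [Field K] (M : Matrix ι ι K) :
    spectrum K Mᵀ = spectrum K M := by
  ext μ
  simp [mem_spectrum_iff_isRoot_charpoly, charpoly_transpose]

theorem exists_mulVec_eq_smul_of_mem_spectrum {K : Type*} [Field K] {M : Matrix ι ι K} {μ : K}
    (hμ : μ ∈ spectrum K M) : ∃ v ≠ 0, M *ᵥ v = μ • v := by
  rw [← spectrum_toLin', ← Module.End.hasEigenvalue_iff_mem_spectrum] at hμ
  obtain ⟨v, hv⟩ := hμ.exists_hasEigenvector
  exact ⟨v, hv.2, by simpa using hv.apply_eq_smul⟩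

theorem tendsto_exp_smul_mulVec_of_pow_sub_mulVec_eq_zero (M : Matrix ι ι ℂ) {μ : ℂ}
    (hμ : μ.re < 0) {k : ℕ} {x : ι → ℂ} (hx : (M - μ • 1) ^ k *ᵥ x = 0) :
    Tendsto (fun s : ℝ => exp ((s : ℂ) • M) *ᵥ x) atTop (𝓝 0) := by
  have hsx : ∀ s : ℝ, ((s : ℂ) • M - (s * μ) • 1) ^ k *ᵥ x = 0 := fun s => by
    rw [mul_smul, ← smul_sub, smul_pow, smul_mulVec, hx, smul_zero]
  have key : ∀ s : ℝ, exp ((s : ℂ) • M) *ᵥ x = ∑ j ∈ Finset.range k,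
      ((j.factorial : ℂ)⁻¹ * (Complex.exp (s * μ) * (s : ℂ) ^ j)) • ((M - μ • 1) ^ j *ᵥ x) := by
    intro s
    rw [exp_mulVec_of_pow_sub_mulVec_eq_zero _ _ (hsx s), Finset.smul_sum]
    refine Finset.sum_congr rfl fun j _ => ?_
    rw [mul_smul, ← smul_sub, smul_pow, smul_mulVec, smul_smul, smul_smul]
    ring_nf
  simp_rw [key]
  simpa using tendsto_finsetSum (Finset.range k) fun j _ =>
    ((tendsto_cexp_mul_mul_pow_atTop hμ j).const_mul (j.factorial : ℂ)⁻¹).smul_const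
      ((M - μ • 1) ^ j *ᵥ x)

theorem tendsto_exp_smul_atTop_zero {M : Matrix ι ι ℂ} (hM : ∀ μ ∈ spectrum ℂ M, μ.re < 0) :
    Tendsto (fun s : ℝ => exp ((s : ℂ) • M)) atTop (𝓝 0) := by
  have hcol : ∀ x : ι → ℂ, Tendsto (fun s : ℝ => exp ((s : ℂ) • M) *ᵥ x) atTop (𝓝 0) := by
    intro x
    have hx : x ∈ ⨆ μ, Module.End.maxGenEigenspace (toLinAlgEquiv' M) μ := by
      rw [Module.End.iSup_maxGenEigenspace_eq_top]; trivial
    refine Submodule.iSup_induction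
      (motive := fun y => Tendsto (fun s : ℝ => exp ((s : ℂ) • M) *ᵥ y) atTop (𝓝 0)) _ hx
      (fun μ y hy => ?_) (by simp) fun y z hy hz => ?_
    · obtain ⟨k, hk⟩ := (Module.End.mem_maxGenEigenspace _ _ _).mp hy
      rw [← map_one toLinAlgEquiv', ← map_smul, ← map_sub, ← map_pow,
        toLinAlgEquiv'_apply] at hk
      by_cases hy0 : y = 0
      · simp [hy0]
      have hμ : μ ∈ spectrum ℂ M := by
        rw [← AlgEquiv.spectrum_eq toLinAlgEquiv']
        have hgen : Module.End.HasUnifEigenvalue (toLinAlgEquiv' M) μ ⊤ :=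
          (Submodule.ne_bot_iff _).mpr ⟨y, hy, hy0⟩
        exact (hgen.lt zero_lt_one).mem_spectrum
      exact tendsto_exp_smul_mulVec_of_pow_sub_mulVec_eq_zero M (hM μ hμ) hk
    · simpa [mulVec_add] using hy.add hz
  refine tendsto_pi_nhds.mpr fun i => tendsto_pi_nhds.mpr fun j => ?_
  simpa [mulVec_single_one] using (tendsto_pi_nhds.mp (hcol (Pi.single j 1))) i

end

end Matrix

section MatrixPower

open NormedSpace

variable {n : ℕ}

theorem mpow_transpose (r : ℝ) (A : Matrix (Fin n) (Fin n) ℝ) : mpow r Aᵀ = (mpow r A)ᵀ := by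
  rw [mpow, mpow, ← exp_transpose, transpose_smul]

theorem mpow_map_ofReal (r : ℝ) (A : Matrix (Fin n) (Fin n) ℝ) :
    (mpow r A).map Complex.ofReal = exp ((Real.log r : ℂ) • A.map Complex.ofReal) := by
  have hmap : (Real.log r • A).map Complex.ofReal = (Real.log r : ℂ) • A.map Complex.ofReal := by
    ext i j; simp
  rw [mpow, ← hmap]
  exact open scoped Norms.Operator in
    map_exp (Complex.ofRealHom.mapMatrix (m := Fin n))
      (continuous_id.matrix_map Complex.continuous_ofReal) _

theorem tendsto_mpow_nhdsGT_zero {A : Matrix (Fin n) (Fin n) ℝ} (hA : A ∈ QSet n) :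
    Tendsto (fun r => mpow r A) (𝓝[>] 0) (𝓝 0) := by
  have hneg : ∀ μ ∈ spectrum ℂ (-A.map Complex.ofReal), μ.re < 0 := by
    intro μ hμ
    rw [← spectrum.neg_eq, Set.mem_neg] at hμ
    simpa using hA (-μ) hμ
  have hlog : Tendsto (fun r : ℝ => -Real.log r) (𝓝[>] 0) atTop :=
    tendsto_neg_atBot_atTop.comp Real.tendsto_log_nhdsGT_zero
  have hC := (tendsto_exp_smul_atTop_zero hneg).comp hlog
  have hre := ((continuous_id.matrix_map Complex.continuous_re).tendsto 0).comp hC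
  refine (hre.congr fun r => ?_).trans (by simp)
  ext i j
  simpa using congrArg (fun M => (M i j).re) (mpow_map_ofReal r A).symm

theorem exists_mulVec_mpow_eq_self {A : Matrix (Fin n) (Fin n) ℝ} {μ : ℂ}
    (hμ : μ ∈ matSpectrum A) (hre : μ.re = 0) :
    ∃ y ≠ 0, ∃ r : ℕ → ℝ, Tendsto r atTop (𝓝[>] 0) ∧ ∀ k, mpow (r k) A *ᵥ y = y := by
  obtain ⟨v, hv0, hv⟩ := exists_mulVec_eq_smul_of_mem_spectrum hμ
  obtain ⟨p, hp, hpμ⟩ := exists_pos_cexp_mul_eq_one hre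
  set r : ℕ → ℝ := fun k => Real.exp (-(k * p))
  have hr : Tendsto r atTop (𝓝[>] 0) := Real.tendsto_exp_atBot_nhdsGT.comp
    (tendsto_neg_atTop_atBot.comp (tendsto_natCast_atTop_atTop.atTop_mul_const hp))
  have hfix : ∀ k, (mpow (r k) A).map Complex.ofReal *ᵥ v = v := by
    intro k
    have hperiod : Complex.exp ((Real.log (r k) : ℂ) * μ) = 1 := by
      rw [Real.log_exp]
      push_cast
      rw [show -(k * p : ℂ) * μ = -(k * (p * μ)) by ring, Complex.exp_neg, Complex.exp_nat_mul,
        hpμ, one_pow, inv_one]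
    rw [mpow_map_ofReal, exp_mulVec_of_mulVec_eq_smul (by rw [smul_mulVec, hv, smul_smul]),
      hperiod, one_smul]
  by_cases hre0 : (fun i => (v i).re) = 0
  · refine ⟨fun i => (v i).im, fun him => hv0 ?_, r, hr, fun k => ?_⟩
    · exact funext fun i => Complex.ext (congrFun hre0 i) (congrFun him i)
    · rw [← im_map_ofReal_mulVec, hfix]
  · exact ⟨_, hre0, r, hr, fun k => by rw [← re_map_ofReal_mulVec, hfix]⟩

end MatrixPower

theorem Filter.Tendsto.mulVec_of_tendsto_zero {ι m n : Type*} [Fintype n] {l : Filter ι}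
    {M : ι → Matrix m n ℝ} {v : ι → n → ℝ} {v₀ : n → ℝ} (hM : Tendsto M l (𝓝 0))
    (hv : Tendsto v l (𝓝 v₀)) : Tendsto (fun i => M i *ᵥ v i) l (𝓝 0) := by
  simpa [Function.comp_def] using
    ((continuous_fst.matrix_mulVec continuous_snd).tendsto (0, v₀)).comp (hM.prodMk_nhds hv)

theorem continuousOn_ite_fst_eq_zero {T E : Type*} [TopologicalSpace T] [TopologicalSpace E]
    {b : ℝ → T → E} {a : E}
    (hpos : ∀ r : ℝ, 0 < r → ∀ t, ContinuousAt (fun p : ℝ × T => b p.1 p.2) (r, t))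
    (hzero : ∀ t, Tendsto (fun p : ℝ × T => b p.1 p.2) (𝓝[{p | 0 < p.1}] (0, t)) (𝓝 a)) :
    ContinuousOn (fun p : ℝ × T => if p.1 = 0 then a else b p.1 p.2) {p | 0 ≤ p.1} := by
  rintro ⟨r, t⟩ (hr : 0 ≤ r)
  rcases hr.eq_or_lt with rfl | hr
  · have hsplit : {p : ℝ × T | 0 ≤ p.1} = {p | p.1 = 0} ∪ {p | 0 < p.1} := by
      ext p; simp [le_iff_eq_or_lt, eq_comm]
    rw [ContinuousWithinAt, hsplit, nhdsWithin_union, tendsto_sup, if_pos rfl]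
    exact ⟨tendsto_const_nhds.congr' <|
        eventually_nhdsWithin_of_forall fun p hp => (if_pos hp).symm,
      (hzero t).congr' <| eventually_nhdsWithin_of_forall fun p hp => (if_neg hp.ne').symm⟩
  · refine ((hpos r hr t).congr ?_).continuousWithinAt
    filter_upwards [(isOpen_lt continuous_const continuous_fst).mem_nhds hr] with p hp
    exact (if_neg hp.ne').symm

section Probability

open ProbabilityTheory

theorem IdentFDD.identDistrib {Ω T β : Type*} [MeasurableSpace Ω] [MeasurableSpace β]
    {P : Measure Ω} {Y Z : T → Ω → β} (h : IdentFDD P Y Z) (hY : ∀ t, Measurable (Y t))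
    (hZ : ∀ t, Measurable (Z t)) (t : T) : IdentDistrib (Y t) (Z t) P P where
  aemeasurable_fst := (hY t).aemeasurable
  aemeasurable_snd := (hZ t).aemeasurable
  map_eq := by
    have h1 := congrArg (Measure.map fun v : Fin 1 → β => v 0) (h 1 fun _ => t)
    rwa [Measure.map_map (measurable_pi_apply 0) (measurable_pi_lambda _ fun _ => hY t),
      Measure.map_map (measurable_pi_apply 0) (measurable_pi_lambda _ fun _ => hZ t)] at h1

namespace MeasureTheory

variable {Ω ι E F : Type*} [MeasurableSpace Ω] {μ : Measure Ω} {l : Filter ι}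

theorem TendstoInMeasure.of_identDistrib [PseudoMetricSpace E] [MeasurableSpace E]
    [OpensMeasurableSpace E] {f g : ι → Ω → E} {c : E}
    (hf : TendstoInMeasure μ f l fun _ => c) (hfg : ∀ᶠ i in l, IdentDistrib (f i) (g i) μ μ) :
    TendstoInMeasure μ g l fun _ => c := by
  rw [tendstoInMeasure_iff_dist] at hf ⊢
  intro ε hε
  refine (hf ε hε).congr' ?_
  filter_upwards [hfg] with i hi
  exact hi.measure_mem_eq
    (isClosed_le continuous_const (continuous_id.dist continuous_const)).measurableSet

theorem TendstoInMeasure.comp_continuousAt [PseudoMetricSpace E] [PseudoMetricSpace F]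
    {f : ι → Ω → E} {c : E} (hf : TendstoInMeasure μ f l fun _ => c) {φ : E → F}
    (hφ : ContinuousAt φ c) : TendstoInMeasure μ (fun i ω => φ (f i ω)) l fun _ => φ c := by
  rw [tendstoInMeasure_iff_dist] at hf ⊢
  intro ε hε
  obtain ⟨δ, hδ, hφδ⟩ := Metric.continuousAt_iff.mp hφ ε hε
  refine tendsto_of_tendsto_of_tendsto_of_le_of_le tendsto_const_nhds (hf δ hδ)
    (fun _ => zero_le) fun i => measure_mono fun ω hω => ?_
  by_contra hlt
  exact (not_le.mpr (hφδ (not_le.mp hlt))) hω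

theorem TendstoInMeasure.exists_ae_eq_const_of_add [NormedAddCommGroup E] [NeZero μ]
    [l.NeBot] [l.IsCountablyGenerated] {W : Ω → E} {c : ι → E} {a : E}
    (h : TendstoInMeasure μ (fun i ω => W ω + c i) l fun _ => a) : ∃ v, ∀ᵐ ω ∂μ, W ω = v := by
  obtain ⟨ns, -, hns⟩ := h.exists_seq_tendsto_ae'
  obtain ⟨ω₀, hω₀⟩ := hns.exists
  refine ⟨W ω₀, hns.mono fun ω hω => ?_⟩
  have hdiff := hω.sub hω₀
  simp only [add_sub_add_right_eq_sub, sub_self, tendsto_const_nhds_iff] at hdiff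
  exact sub_eq_zero.mp hdiff

theorem TendstoInMeasure.tendsto_of_add [NormedAddCommGroup E] [IsProbabilityMeasure μ]
    {Z : ι → Ω → E} {c : ι → E} {a : E} (hZ : TendstoInMeasure μ Z l 0)
    (hZc : TendstoInMeasure μ (fun i ω => Z i ω + c i) l fun _ => a) : Tendsto c l (𝓝 a) := by
  rw [tendstoInMeasure_iff_norm] at hZ
  rw [tendstoInMeasure_iff_dist] at hZc
  simp only [Pi.zero_apply, sub_zero] at hZ
  refine Metric.tendsto_nhds.mpr fun ε hε => ?_
  have hhalf : (0 : ℝ≥0∞) < 1 / 2 := by norm_num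
  filter_upwards [(hZ (ε / 2) (half_pos hε)).eventually_lt_const hhalf,
    (hZc (ε / 2) (half_pos hε)).eventually_lt_const hhalf] with i hZi hZci
  -- Each exceptional set has probability `< 1/2`, so some `ω` avoids both, and at that `ω`
  -- the triangle inequality gives `dist (c i) a < ε`.
  by_contra! hfar
  have hcover : {ω | ε / 2 ≤ ‖Z i ω‖} ∪ {ω | ε / 2 ≤ dist (Z i ω + c i) a} = univ := by
    refine eq_univ_of_forall fun ω => ?_
    by_contra! hω
    simp only [mem_union, mem_ofPred_eq, not_or, not_le] at hω
    have := dist_triangle (c i) (Z i ω + c i) a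
    rw [dist_add_self_right] at this
    linarith
  have := (measure_union_le (μ := μ) _ _).trans_lt (ENNReal.add_lt_add hZi hZci)
  rw [hcover, measure_univ, ENNReal.add_halves] at this
  exact lt_irrefl _ this

theorem tendsto_measure_le_norm_atTop [NormedAddCommGroup E] [MeasurableSpace E]
    [OpensMeasurableSpace E] [IsFiniteMeasure μ] {W : Ω → E}
    (hW : Measurable W) : Tendsto (fun K : ℝ => μ {ω | K ≤ ‖W ω‖}) atTop (𝓝 0) := by
  have hempty : ⋂ K : ℝ, {ω | K ≤ ‖W ω‖} = ∅ :=
    eq_empty_of_forall_notMem fun ω hω => by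
      obtain ⟨K, hK⟩ := exists_gt ‖W ω‖
      exact not_le.mpr hK (mem_iInter.mp hω K)
  simpa [Function.comp_def, hempty] using
    tendsto_measure_iInter_atTop (μ := μ) (s := fun K : ℝ => {ω | K ≤ ‖W ω‖})
    (fun K => (measurableSet_le measurable_const hW.norm).nullMeasurableSet)
    (fun K L hKL ω hω => le_trans hKL hω) ⟨0, measure_ne_top _ _⟩

open scoped Matrix.Norms.Operator in
theorem TendstoInMeasure.mulVec_of_tendsto_zero {m : Type*} [Fintype m] [IsFiniteMeasure μ]
    {M : ι → Matrix m m ℝ} (hM : Tendsto M l (𝓝 0)) {V : ι → Ω → m → ℝ} {W : Ω → m → ℝ}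
    (hW : Measurable W) (hV : TendstoInMeasure μ V l W) :
    TendstoInMeasure μ (fun i ω => M i *ᵥ V i ω) l 0 := by
  rw [tendstoInMeasure_iff_dist] at hV
  rw [tendstoInMeasure_iff_norm]
  intro ε hε
  refine ENNReal.tendsto_nhds_zero.mpr fun δ hδ => ?_
  obtain ⟨K, hK⟩ := ((tendsto_measure_le_norm_atTop (μ := μ) hW).eventually
    (ge_mem_nhds (ENNReal.half_pos hδ.ne'))).exists
  have hMK : ∀ᶠ i in l, ‖M i‖ * (K + 1) < ε := by
    have := (tendsto_zero_iff_norm_tendsto_zero.mp hM).mul_const (K + 1)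
    rw [zero_mul] at this
    exact this.eventually_lt_const hε
  filter_upwards [hMK, (hV 1 one_pos).eventually_le_const (ENNReal.half_pos hδ.ne')]
    with i hMi hVi
  calc μ {ω | ε ≤ ‖M i *ᵥ V i ω - (0 : Ω → m → ℝ) ω‖}
      ≤ μ ({ω | 1 ≤ dist (V i ω) (W ω)} ∪ {ω | K ≤ ‖W ω‖}) := measure_mono fun ω hω => by
        by_contra! hout
        simp only [mem_union, mem_ofPred_eq, not_or, not_le] at hout
        have hVω : ‖V i ω‖ ≤ K + 1 := by
          have := norm_le_norm_add_norm_sub' (V i ω) (W ω)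
          rw [← dist_eq_norm] at this
          linarith
        have : ‖M i *ᵥ V i ω‖ < ε :=
          ((Matrix.linfty_opNorm_mulVec _ _).trans
            (mul_le_mul_of_nonneg_left hVω (norm_nonneg _))).trans_lt hMi
        simp only [Pi.zero_apply, sub_zero, mem_ofPred_eq] at hω
        linarith
    _ ≤ δ / 2 + δ / 2 := (measure_union_le _ _).trans (add_le_add hVi hK)
    _ = δ := ENNReal.add_halves δ

end MeasureTheory

end Probability

section SelfSimilarField

open ProbabilityTheory

variable {d m : ℕ} {Ω : Type*} [MeasurableSpace Ω] {P : Measure Ω} [IsProbabilityMeasure P]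
  {E : Matrix (Fin d) (Fin d) ℝ} {D : Matrix (Fin m) (Fin m) ℝ}

theorem exists_ae_eq_const_of_identDistrib_mpow {Y : Ω → Fin m → ℝ} (hY : Measurable Y)
    (hD : D ∈ QSet m) {c : ℝ → Fin m → ℝ}
    (hlaw : ∀ r, 0 < r → IdentDistrib Y (fun ω => mpow r D *ᵥ Y ω + c r) P P) :
    ∃ a, ∀ᵐ ω ∂P, Y ω = a := by
  have hconst : TendstoInMeasure P (fun _ : ℝ => Y) (𝓝[>] 0) Y := fun ε hε => by
    simp [not_le.mpr hε]
  have hsmall := hconst.mulVec_of_tendsto_zero (tendsto_mpow_nhdsGT_zero hD) hY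
  refine (hsmall.of_identDistrib (c := 0) ?_).exists_ae_eq_const_of_add (c := fun r => -c r)
  filter_upwards [self_mem_nhdsWithin] with r (hr : 0 < r)
  simpa [Function.comp_def] using ((hlaw r hr).comp (measurable_add_const (-c r))).symm

theorem mem_QSet_of_tendstoInMeasure_const {X : (Fin d → ℝ) → Ω → (Fin m → ℝ)}
    (hXmeas : ∀ t, Measurable (X t)) (hE : E ∈ QSet d) (hD : D ∈ MSet m) {a : Fin m → ℝ}
    (hX0 : TendstoInMeasure P X (𝓝 0) fun _ => a) {t₀ : Fin d → ℝ}
    (hfull : IsFullMeasure (P.map (X t₀))) {c : ℝ → Fin m → ℝ}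
    (hlaw : ∀ r, 0 < r →
      IdentDistrib (X (mpow r E *ᵥ t₀)) (fun ω => mpow r D *ᵥ X t₀ ω + c r) P P) :
    D ∈ QSet m := by
  by_contra hDQ
  obtain ⟨μ, hμ, hre⟩ : ∃ μ ∈ matSpectrum Dᵀ, μ.re = 0 := by
    simp only [QSet, mem_ofPred_eq, not_forall, not_lt] at hDQ
    obtain ⟨μ, hμ, hle⟩ := hDQ
    refine ⟨μ, ?_, le_antisymm hle (hD μ hμ).1⟩
    rwa [matSpectrum, transpose_map, spectrum_transpose]
  obtain ⟨y, hy0, r, hr, hfix⟩ := exists_mulVec_mpow_eq_self hμ hre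
  have hφ : ∀ k z w, (mpow (r k) D *ᵥ z + w) ⬝ᵥ y = z ⬝ᵥ y + w ⬝ᵥ y := by
    intro k z w
    rw [add_dotProduct, dotProduct_comm, dotProduct_mulVec, ← mulVec_transpose, ← mpow_transpose,
      hfix, dotProduct_comm]
  have hφc : Continuous fun x : Fin m → ℝ => x ⬝ᵥ y := continuous_id.dotProduct continuous_const
  have hX : TendstoInMeasure P (fun k => X (mpow (r k) E *ᵥ t₀)) atTop fun _ => a :=
    hX0.comp (((tendsto_mpow_nhdsGT_zero hE).comp hr).mulVec_of_tendsto_zero tendsto_const_nhds)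
  have hconv := hX.comp_continuousAt hφc.continuousAt
  have hlawφ : ∀ᶠ k in atTop, IdentDistrib (fun ω => X (mpow (r k) E *ᵥ t₀) ω ⬝ᵥ y)
      (fun ω => X t₀ ω ⬝ᵥ y + c (r k) ⬝ᵥ y) P P := by
    filter_upwards [hr.eventually eventually_mem_nhdsWithin] with k (hk : 0 < r k)
    simpa [Function.comp_def, hφ] using (hlaw (r k) hk).comp hφc.measurable
  obtain ⟨v, hv⟩ := (hconv.of_identDistrib hlawφ).exists_ae_eq_const_of_add
  refine hfull y hy0 v ?_
  have hS : MeasurableSet {x : Fin m → ℝ | x ⬝ᵥ y = v} :=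
    measurableSet_eq_fun hφc.measurable measurable_const
  change P.map (X t₀) {x | x ⬝ᵥ y = v} = 1
  rw [Measure.map_apply (hXmeas t₀) hS, ← measure_univ (μ := P)]
  exact (ae_iff_measure_eq (hS.preimage (hXmeas t₀)).nullMeasurableSet).mp hv

theorem tendsto_nhdsWithin_zero_of_identDistrib_mpow {X : (Fin d → ℝ) → Ω → (Fin m → ℝ)}
    (hXmeas : ∀ t, Measurable (X t)) (hE : E ∈ QSet d) (hD : D ∈ QSet m) {a : Fin m → ℝ}
    (hX0 : TendstoInMeasure P X (𝓝 0) fun _ => a) {t₀ : Fin d → ℝ}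
    (hXt₀ : TendstoInMeasure P X (𝓝 t₀) (X t₀)) {b : ℝ → (Fin d → ℝ) → Fin m → ℝ}
    (hlaw : ∀ r, 0 < r → ∀ t,
      IdentDistrib (X (mpow r E *ᵥ t)) (fun ω => mpow r D *ᵥ X t ω + b r t) P P) :
    Tendsto (fun p : ℝ × (Fin d → ℝ) => b p.1 p.2) (𝓝[{p | 0 < p.1}] (0, t₀)) (𝓝 a) := by
  set l := 𝓝[{p : ℝ × (Fin d → ℝ) | 0 < p.1}] (0, t₀)
  have hfst : Tendsto (fun p : ℝ × (Fin d → ℝ) => p.1) l (𝓝[>] 0) :=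
    tendsto_nhdsWithin_iff.mpr ⟨(continuous_fst.tendsto _).mono_left nhdsWithin_le_nhds,
      eventually_nhdsWithin_of_forall fun p hp => hp⟩
  have hsnd : Tendsto (fun p : ℝ × (Fin d → ℝ) => p.2) l (𝓝 t₀) :=
    (continuous_snd.tendsto _).mono_left nhdsWithin_le_nhds
  have hY := hX0.comp (((tendsto_mpow_nhdsGT_zero hE).comp hfst).mulVec_of_tendsto_zero hsnd)
  have hZ := (hXt₀.comp hsnd).mulVec_of_tendsto_zero ((tendsto_mpow_nhdsGT_zero hD).comp hfst)
    (hXmeas t₀)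
  refine hZ.tendsto_of_add (hY.of_identDistrib ?_)
  filter_upwards [eventually_nhdsWithin_of_forall fun p hp => hp] with p (hp : 0 < p.1)
  exact hlaw p.1 hp p.2

end SelfSimilarField

theorem woss_const_at_zero_iff_general {d m : ℕ} (hd : 2 ≤ d)
    {Ω : Type*} [MeasurableSpace Ω] (P : Measure Ω) [IsProbabilityMeasure P]
    (X : (Fin d → ℝ) → Ω → (Fin m → ℝ)) (hXmeas : ∀ t, Measurable (X t))
    (E : Matrix (Fin d) (Fin d) ℝ) (hE : E ∈ QSet d)
    (hXc : StochContinuous P X) (hXp : ProperField P X)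
    (D : Matrix (Fin m) (Fin m) ℝ) (hD : D ∈ MSet m)
    (b : ℝ → (Fin d → ℝ) → (Fin m → ℝ))
    (hbc : ∀ r : ℝ, 0 < r → ∀ t : Fin d → ℝ,
      ContinuousAt (fun p : ℝ × (Fin d → ℝ) => b p.1 p.2) (r, t))
    (hfdd : ∀ r : ℝ, 0 < r →
      IdentFDD P (fun t ω => X (mpow r E *ᵥ t) ω)
        (fun t ω => mpow r D *ᵥ X t ω + b r t)) :
    ((∃ a : Fin m → ℝ, ∀ᵐ ω ∂P, X 0 ω = a) ↔ D ∈ QSet m) ∧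
    (∀ a : Fin m → ℝ, D ∈ QSet m → (∀ᵐ ω ∂P, X 0 ω = a) →
      ContinuousOn (fun p : ℝ × (Fin d → ℝ) => if p.1 = 0 then a else b p.1 p.2)
        {p : ℝ × (Fin d → ℝ) | 0 ≤ p.1}) := by
  have hlaw : ∀ r, 0 < r → ∀ t, ProbabilityTheory.IdentDistrib (X (mpow r E *ᵥ t))
      (fun ω => mpow r D *ᵥ X t ω + b r t) P P := fun r hr =>
    (hfdd r hr).identDistrib (fun _ => hXmeas _) fun t =>
      ((continuous_const.matrix_mulVec continuous_id).add continuous_const).measurable.comp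
        (hXmeas t)
  have hXc' : ∀ t, TendstoInMeasure P X (𝓝 t) (X t) := fun t =>
    tendstoInMeasure_iff_dist.mpr (hXc t)
  have hX0 : ∀ a, (∀ᵐ ω ∂P, X 0 ω = a) → TendstoInMeasure P X (𝓝 0) fun _ => a :=
    fun a ha => (hXc' 0).congr_right ha
  have ht₀ : (Pi.single ⟨0, by omega⟩ 1 : Fin d → ℝ) ≠ 0 := by simp
  refine ⟨⟨fun ⟨a, ha⟩ => ?_, fun hDQ => ?_⟩, fun a hDQ ha => ?_⟩
  · exact mem_QSet_of_tendstoInMeasure_const hXmeas hE hD (hX0 a ha) (hXp _ ht₀)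
      fun r hr => hlaw r hr _
  · exact exists_ae_eq_const_of_identDistrib_mpow (hXmeas 0) hDQ fun r hr => by
      simpa using hlaw r hr 0
  · exact continuousOn_ite_fst_eq_zero hbc fun t =>
      tendsto_nhdsWithin_zero_of_identDistrib_mpow hXmeas hE hDQ (hX0 a ha) (hXc' t) hlaw

/-- **Theorem 2.1 (second part).** `X(0)` is a.s. constant iff `D ∈ Q(ℝ^m)`; in that
case, extending `b` by `b_0(t) ≡ a`, the shift is continuous on `[0,∞) × ℝ^d`. -/
theorem woss_const_at_zero_iff {d m : ℕ} (hd : 2 ≤ d) (hm : 2 ≤ m)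
    {Ω : Type*} [MeasurableSpace Ω] (P : Measure Ω) [IsProbabilityMeasure P]
    (X : (Fin d → ℝ) → Ω → (Fin m → ℝ)) (hXmeas : ∀ t, Measurable (X t))
    (E : Matrix (Fin d) (Fin d) ℝ) (hE : E ∈ QSet d)
    (hXc : StochContinuous P X) (hXp : ProperField P X)
    (hX : WOSS P X E)
    (D : Matrix (Fin m) (Fin m) ℝ) (hD : D ∈ MSet m)
    (b : ℝ → (Fin d → ℝ) → (Fin m → ℝ))
    (hbc : ∀ r : ℝ, 0 < r → ∀ t : Fin d → ℝ,
      ContinuousAt (fun p : ℝ × (Fin d → ℝ) => b p.1 p.2) (r, t))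
    (hfdd : ∀ r : ℝ, 0 < r →
      IdentFDD P (fun t ω => X (mpow r E *ᵥ t) ω)
        (fun t ω => mpow r D *ᵥ X t ω + b r t)) :
    ((∃ a : Fin m → ℝ, ∀ᵐ ω ∂P, X 0 ω = a) ↔ D ∈ QSet m) ∧
    (∀ a : Fin m → ℝ, D ∈ QSet m → (∀ᵐ ω ∂P, X 0 ω = a) →
      ContinuousOn (fun p : ℝ × (Fin d → ℝ) => if p.1 = 0 then a else b p.1 p.2)
        {p : ℝ × (Fin d → ℝ) | 0 ≤ p.1}) :=
  woss_const_at_zero_iff_general hd P X hXmeas E hE hXc hXp D hD b hbc hfdd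
end

section
/- Let X = {X(t), t ∈ ℝ^d} be a stochastically continuous and proper ℝ^m-valued random field, let E ∈ Q(ℝ^d), and let G_r and G be as defined. Then G is a subgroup of Aut(ℝ^m): the identity matrix I belongs to G₁; if A ∈ G_r then A⁻¹ ∈ G_{1/r}; and if A ∈ G_r and B ∈ G_s then AB ∈ G_{sr}. -/
open MeasureTheory Filter Matrix Topology Set
open scoped ENNReal NNReal

/-! Equality of finite-dimensional distributions survives reindexing time and applying the same
measurable map to every coordinate on both sides. Reindexing `X(r^E t) ≡fdd A X(t) + b(t)` by
`t ↦ r^{-E} t` and solving for `X` gives `A⁻¹ ∈ G_{1/r}`; feeding `X(s^E t) ≡fdd B X(t) + c(t)`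
into the relation for `A`, via `r^E s^E = (rs)^E`, gives `AB ∈ G_{sr}`. -/

lemma mpow_one {n : ℕ} (A : Matrix (Fin n) (Fin n) ℝ) : mpow 1 A = 1 := by
  simp [mpow]

lemma mpow_mul_mpow {n : ℕ} (A : Matrix (Fin n) (Fin n) ℝ) {r s : ℝ} (hr : 0 < r) (hs : 0 < s) :
    mpow r A * mpow s A = mpow (r * s) A := by
  rw [mpow, mpow, mpow, Real.log_mul hr.ne' hs.ne', add_smul]
  exact (Matrix.exp_add_of_commute _ _ ((Commute.refl A).smul_left _ |>.smul_right _)).symm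

lemma mpow_mulVec_mpow_inv {n : ℕ} (A : Matrix (Fin n) (Fin n) ℝ) {r : ℝ} (hr : 0 < r)
    (v : Fin n → ℝ) : mpow r A *ᵥ (mpow r⁻¹ A *ᵥ v) = v := by
  rw [mulVec_mulVec, mpow_mul_mpow A hr (inv_pos.mpr hr), mul_inv_cancel₀ hr.ne', mpow_one,
    one_mulVec]

lemma measurable_mulVec {m n : ℕ} (M : Matrix (Fin m) (Fin n) ℝ) :
    Measurable (M *ᵥ ·) :=
  (continuous_const.matrix_mulVec continuous_id).measurable

namespace IdentFDD

variable {Ω S T β γ : Type*} [MeasurableSpace Ω] [MeasurableSpace β] [MeasurableSpace γ]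
  {P : Measure Ω} {Y Z W : T → Ω → β}

lemma symm (h : IdentFDD P Y Z) : IdentFDD P Z Y :=
  fun k t => (h k t).symm

lemma trans (h₁ : IdentFDD P Y Z) (h₂ : IdentFDD P Z W) : IdentFDD P Y W :=
  fun k t => (h₁ k t).trans (h₂ k t)

lemma comp_right (h : IdentFDD P Y Z) (f : S → T) :
    IdentFDD P (fun s => Y (f s)) (fun s => Z (f s)) :=
  fun k t => h k (f ∘ t)

lemma map (h : IdentFDD P Y Z) (hY : ∀ t, Measurable (Y t)) (hZ : ∀ t, Measurable (Z t))
    {φ : T → β → γ} (hφ : ∀ t, Measurable (φ t)) :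
    IdentFDD P (fun t ω => φ t (Y t ω)) (fun t ω => φ t (Z t ω)) := by
  intro k t
  have hfdd : ProbabilityTheory.IdentDistrib (fun ω i => Y (t i) ω) (fun ω i => Z (t i) ω) P P :=
    ⟨(measurable_pi_lambda _ fun i => hY (t i)).aemeasurable,
      (measurable_pi_lambda _ fun i => hZ (t i)).aemeasurable, h k t⟩
  exact (hfdd.comp (measurable_pi_lambda (fun (v : Fin k → β) i => φ (t i) (v i))
    fun i => (hφ (t i)).comp (measurable_pi_apply i))).map_eq

end IdentFDD

section GSet

variable {d m : ℕ} {Ω : Type*} [MeasurableSpace Ω] {P : Measure Ω}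
  {X : (Fin d → ℝ) → Ω → (Fin m → ℝ)} {E : Matrix (Fin d) (Fin d) ℝ}

lemma one_mem_GSet_one : (1 : Matrix (Fin m) (Fin m) ℝ) ∈ GSet P X E 1 :=
  ⟨isUnit_one, fun _ => 0, by simp [IdentFDD, mpow_one]⟩

lemma measurable_affine_field (hX : ∀ t, Measurable (X t)) (A : Matrix (Fin m) (Fin m) ℝ)
    (b : (Fin d → ℝ) → Fin m → ℝ) (t : Fin d → ℝ) :
    Measurable fun ω => A *ᵥ X t ω + b t :=
  ((measurable_mulVec A).comp (hX t)).add_const _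

lemma inv_mem_GSet_inv (hX : ∀ t, Measurable (X t)) {r : ℝ} (hr : 0 < r)
    {A : Matrix (Fin m) (Fin m) ℝ} (hA : A ∈ GSet P X E r) : A⁻¹ ∈ GSet P X E r⁻¹ := by
  obtain ⟨hAu, b, hb⟩ := hA
  refine ⟨isUnit_nonsing_inv_iff.mpr hAu, fun t => -(A⁻¹ *ᵥ b (mpow r⁻¹ E *ᵥ t)), ?_⟩
  have h := (hb.comp_right (mpow r⁻¹ E *ᵥ ·)).map (fun _ => hX _)
    (fun _ => measurable_affine_field hX A b _)
    (φ := fun t v => A⁻¹ *ᵥ v - A⁻¹ *ᵥ b (mpow r⁻¹ E *ᵥ t))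
    (fun t => (measurable_mulVec A⁻¹).sub_const _)
  simp only [mpow_mulVec_mpow_inv E hr] at h
  simp only [mulVec_add, add_sub_cancel_right, mulVec_mulVec,
    nonsing_inv_mul A ((isUnit_iff_isUnit_det A).mp hAu), one_mulVec] at h
  simpa only [sub_eq_add_neg] using h.symm

lemma mul_mem_GSet_mul (hX : ∀ t, Measurable (X t)) {r s : ℝ} (hr : 0 < r) (hs : 0 < s)
    {A B : Matrix (Fin m) (Fin m) ℝ} (hA : A ∈ GSet P X E r) (hB : B ∈ GSet P X E s) :
    A * B ∈ GSet P X E (s * r) := by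
  obtain ⟨hAu, b, hb⟩ := hA
  obtain ⟨hBu, c, hc⟩ := hB
  refine ⟨hAu.mul hBu, fun t => A *ᵥ c t + b (mpow s E *ᵥ t), ?_⟩
  have h₁ := hb.comp_right (mpow s E *ᵥ ·)
  have h₂ := hc.map (fun _ => hX _) (fun _ => measurable_affine_field hX B c _)
    (φ := fun t v => A *ᵥ v + b (mpow s E *ᵥ t)) (fun _ => (measurable_mulVec A).add_const _)
  rw [mul_comm s r, ← mpow_mul_mpow E hr hs]
  simp only [mulVec_mulVec] at h₁
  simp only [mulVec_add, mulVec_mulVec, add_assoc] at h₂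
  exact h₁.trans h₂

end GSet

theorem GSet_group_general {d m : ℕ}
    {Ω : Type*} [MeasurableSpace Ω] (P : Measure Ω)
    (X : (Fin d → ℝ) → Ω → (Fin m → ℝ)) (hXmeas : ∀ t, Measurable (X t))
    (E : Matrix (Fin d) (Fin d) ℝ) :
    (1 : Matrix (Fin m) (Fin m) ℝ) ∈ GSet P X E 1 ∧
    (∀ r : ℝ, 0 < r → ∀ A ∈ GSet P X E r, A⁻¹ ∈ GSet P X E (1 / r)) ∧
    (∀ r s : ℝ, 0 < r → 0 < s →
      ∀ A ∈ GSet P X E r, ∀ B ∈ GSet P X E s, A * B ∈ GSet P X E (s * r)) :=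
  ⟨one_mem_GSet_one,
    fun r hr _ hA => (one_div r).symm ▸ inv_mem_GSet_inv hXmeas hr hA,
    fun _ _ hr hs _ hA _ hB => mul_mem_GSet_mul hXmeas hr hs hA hB⟩

/-- **Lemma 3.1.** `G = ⋃_{r>0} G_r` is a subgroup of `Aut(ℝ^m)`: `I ∈ G₁`,
`A ∈ G_r ⟹ A⁻¹ ∈ G_{1/r}`, and `A ∈ G_r, B ∈ G_s ⟹ AB ∈ G_{sr}`. -/
theorem GSet_group {d m : ℕ} (hd : 2 ≤ d) (hm : 2 ≤ m)
    {Ω : Type*} [MeasurableSpace Ω] (P : Measure Ω) [IsProbabilityMeasure P]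
    (X : (Fin d → ℝ) → Ω → (Fin m → ℝ)) (hXmeas : ∀ t, Measurable (X t))
    (E : Matrix (Fin d) (Fin d) ℝ) (hE : E ∈ QSet d)
    (hXc : StochContinuous P X) (hXp : ProperField P X) :
    (1 : Matrix (Fin m) (Fin m) ℝ) ∈ GSet P X E 1 ∧
    (∀ r : ℝ, 0 < r → ∀ A ∈ GSet P X E r, A⁻¹ ∈ GSet P X E (1 / r)) ∧
    (∀ r s : ℝ, 0 < r → 0 < s →
      ∀ A ∈ GSet P X E r, ∀ B ∈ GSet P X E s, A * B ∈ GSet P X E (s * r)) :=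
  GSet_group_general P X hXmeas E
end

section
/- Let X = {X(t), t ∈ ℝ^d} be a stochastically continuous and proper (E,D)-w.o.s.s. random field with values in ℝ^m, and suppose E has two distinct positive real eigenvalues λ₁ ≠ λ₂ with corresponding real eigenvectors. Then X is operator-self-similar in the sense of Hudson and Mason (i.e. for every r > 0 there exists a vector a(r) ∈ ℝ^m with {X(r^E t), t∈ℝ^d} ≡fdd {r^D X(t) + a(r), t∈ℝ^d}) if and only if b_r(t) depends only on r and |t|, i.e. there is a function g with b_r(t) = g(r,|t|) for all r > 0 and t ∈ ℝ^d. -/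
/-
The fdd relation at `p * s`, computed directly and by composing the relations at `p` and at `s`,
yields the cocycle `b (p * s) t = p^D b s t + b p (s^E t)`, because a law on `ℝ^m` is never a
nontrivial translate of itself. If `b r t = g r |t|`, evaluating the cocycle at eigenvectors of
`E` of equal length for `λ₁` and `λ₂`, on which `s^E` acts as `s^λ₁` and `s^λ₂`, gives
`b r (s^λ₁ ξ) = b r (s^λ₂ ξ)`. Iterating `u ↦ u^(λ₁/λ₂)` (say `λ₁ < λ₂`) drives every radius
to `1`, so by continuity `b r` is constant along the ray through `ξ`, hence everywhere: `X` is
Hudson–Mason self-similar with `a(r) = b r 0`. Conversely, a constant shift `a(r)` and the shift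
`b r` represent the same law with the same `r^D`, so `b r = a(r)` is radial.
-/

open MeasureTheory Filter Matrix Topology Set
open scoped ENNReal NNReal

lemma euclNorm_eq_norm {n : ℕ} (v : Fin n → ℝ) :
    euclNorm v = ‖(WithLp.toLp 2 v : EuclideanSpace ℝ (Fin n))‖ := by
  simp only [euclNorm, EuclideanSpace.norm_eq, Real.norm_eq_abs, sq_abs]

lemma euclNorm_smul {n : ℕ} (c : ℝ) (v : Fin n → ℝ) : euclNorm (c • v) = |c| * euclNorm v := by
  rw [euclNorm_eq_norm, euclNorm_eq_norm, WithLp.toLp_smul, norm_smul, Real.norm_eq_abs]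

lemma euclNorm_pos {n : ℕ} {v : Fin n → ℝ} (hv : v ≠ 0) : 0 < euclNorm v := by
  rw [euclNorm_eq_norm]
  exact norm_pos_iff.2 fun h => hv (by simpa using congrArg WithLp.ofLp h)

open ProbabilityTheory in
lemma Real.eq_zero_of_map_add_const_eq_self (ν : Measure ℝ) [IsProbabilityMeasure ν] {c : ℝ}
    (h : ν.map (· + c) = ν) : c = 0 := by
  have hper : Function.Periodic (cdf ν) c := fun x => by
    rw [cdf_eq_real, cdf_eq_real]
    conv_lhs => rw [← h]
    rw [map_measureReal_apply (measurable_add_const c) measurableSet_Iic, preimage_add_const_Iic,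
      add_sub_cancel_right]
  by_contra hc
  have hper' : Function.Periodic (cdf ν) |c| := by
    rcases abs_choice c with h | h <;> rw [h]
    exacts [hper, hper.neg]
  have hzero : ∀ x, cdf ν x = 0 := fun x => by
    have hbot : Tendsto (fun n : ℕ => x - n * |c|) atTop atBot :=
      tendsto_atBot_add_const_left _ x
        (tendsto_neg_atTop_atBot.comp
          (tendsto_natCast_atTop_atTop.atTop_mul_const (abs_pos.2 hc)))
    exact tendsto_nhds_unique
      (tendsto_const_nhds.congr fun n => (hper'.sub_nat_mul_eq n).symm)
      ((tendsto_cdf_atBot ν).comp hbot)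
  exact zero_ne_one (tendsto_nhds_unique (tendsto_const_nhds.congr fun x => (hzero x).symm)
    (tendsto_cdf_atTop ν))

lemma measurable_mulVec_add {ι κ : Type*} [Fintype ι] [Fintype κ] (M : Matrix κ ι ℝ) (v : κ → ℝ) :
    Measurable fun x : ι → ℝ => M *ᵥ x + v :=
  ((continuous_const.matrix_mulVec continuous_id).add continuous_const).measurable

lemma eq_zero_of_map_add_const_eq_self {ι : Type*} [Fintype ι] (ρ : Measure (ι → ℝ))
    [IsProbabilityMeasure ρ] {w : ι → ℝ} (h : ρ.map (· + w) = ρ) : w = 0 := by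
  have hw : Measurable fun x : ι → ℝ => x ⬝ᵥ w :=
    (continuous_id.dotProduct continuous_const).measurable
  have := Measure.isProbabilityMeasure_map (μ := ρ) hw.aemeasurable
  have hinv : (ρ.map (· ⬝ᵥ w)).map (· + w ⬝ᵥ w) = ρ.map (· ⬝ᵥ w) := by
    conv_rhs => rw [← h]
    rw [Measure.map_map (measurable_add_const _) hw, Measure.map_map hw (measurable_add_const _)]
    congr 1
    funext x
    simp [add_dotProduct]
  exact dotProduct_self_eq_zero.1 (Real.eq_zero_of_map_add_const_eq_self _ hinv)

lemma eq_of_map_mulVec_add_eq {ι κ : Type*} [Fintype ι] [Fintype κ] (μ : Measure (ι → ℝ))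
    [IsProbabilityMeasure μ] (M : Matrix κ ι ℝ) {u v : κ → ℝ}
    (h : μ.map (fun x => M *ᵥ x + u) = μ.map (fun x => M *ᵥ x + v)) : u = v := by
  have := Measure.isProbabilityMeasure_map (μ := μ) (measurable_mulVec_add M v).aemeasurable
  refine sub_eq_zero.1 (eq_zero_of_map_add_const_eq_self (μ.map fun x => M *ᵥ x + v) ?_)
  rw [Measure.map_map (measurable_add_const _) (measurable_mulVec_add M v), ← h]
  congr 1
  funext x
  simp [add_assoc]

lemma IdentFDD.map_eq {Ω T β : Type*} [MeasurableSpace Ω] [MeasurableSpace β] {P : Measure Ω}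
    {Y Z : T → Ω → β} (h : IdentFDD P Y Z) {t : T} (hY : Measurable (Y t))
    (hZ : Measurable (Z t)) : P.map (Y t) = P.map (Z t) := by
  have h1 := congrArg (Measure.map fun v : Fin 1 → β => v 0) (h 1 fun _ => t)
  rwa [Measure.map_map (measurable_pi_apply 0) (measurable_pi_lambda _ fun _ => hY),
    Measure.map_map (measurable_pi_apply 0) (measurable_pi_lambda _ fun _ => hZ)] at h1

lemma mpow_mul {n : ℕ} (A : Matrix (Fin n) (Fin n) ℝ) {r s : ℝ} (hr : 0 < r) (hs : 0 < s) :
    mpow (r * s) A = mpow r A * mpow s A := by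
  rw [mpow, mpow, mpow, Real.log_mul hr.ne' hs.ne', add_smul]
  exact Matrix.exp_add_of_commute _ _ (((Commute.refl A).smul_left _).smul_right _)

lemma exp_mulVec_of_mulVec_eq_smul {ι : Type*} [Fintype ι] [DecidableEq ι]
    {A : Matrix ι ι ℝ} {c : ℝ} {ξ : ι → ℝ} (h : A *ᵥ ξ = c • ξ) :
    NormedSpace.exp A *ᵥ ξ = Real.exp c • ξ := by
  rw [Real.exp_eq_exp_ℝ]
  let : NormedRing (Matrix ι ι ℝ) := Matrix.linftyOpNormedRing
  let : NormedAlgebra ℝ (Matrix ι ι ℝ) := Matrix.linftyOpNormedAlgebra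
  have hpow : ∀ k : ℕ, A ^ k *ᵥ ξ = c ^ k • ξ := fun k => by
    induction k with
    | zero => simp
    | succ k ih => rw [pow_succ, ← mulVec_mulVec, h, mulVec_smul, ih, smul_smul, ← pow_succ']
  have hA := (NormedSpace.exp_series_hasSum_exp' (𝕂 := ℝ) A).map (mulVec.addMonoidHomLeft ξ)
    (continuous_id.matrix_mulVec continuous_const)
  have hc := (NormedSpace.exp_series_hasSum_exp' (𝕂 := ℝ) c).smul_const ξ
  refine hA.unique (hc.congr_fun fun k => ?_)
  simp [mulVec.addMonoidHomLeft, smul_mulVec, hpow, smul_smul]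

lemma mpow_mulVec_of_mulVec_eq_smul {n : ℕ} {E : Matrix (Fin n) (Fin n) ℝ} {lam : ℝ}
    {ξ : Fin n → ℝ} (h : E *ᵥ ξ = lam • ξ) {r : ℝ} (hr : 0 < r) :
    mpow r E *ᵥ ξ = r ^ lam • ξ := by
  rw [mpow, Real.rpow_def_of_pos hr]
  exact exp_mulVec_of_mulVec_eq_smul (by rw [smul_mulVec, h, smul_smul])

lemma apply_eq_apply_zero_of_comp_rpow_eq {α : Type*} [TopologicalSpace α] [T2Space α] {f : ℝ → α}
    (hf : Continuous f) {a b : ℝ} (ha : 0 < a) (hb : 0 < b) (hab : a ≠ b)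
    (h : ∀ s, 0 < s → f (s ^ a) = f (s ^ b)) {u : ℝ} (hu : 0 ≤ u) : f u = f 0 := by
  wlog hlt : a < b generalizing a b
  · exact this hb ha hab.symm (fun s hs => (h s hs).symm) (hab.lt_or_gt.resolve_left hlt)
  have hstep : ∀ v, 0 < v → f (v ^ (a / b)) = f v := fun v hv => by
    simpa only [← Real.rpow_mul hv.le, inv_mul_eq_div, inv_mul_cancel₀ hb.ne', Real.rpow_one]
      using h (v ^ b⁻¹) (Real.rpow_pos_of_pos hv _)
  have hone : ∀ v, 0 < v → f v = f 1 := fun v hv => by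
    have hiter : ∀ k : ℕ, f (v ^ (a / b) ^ k) = f v := fun k => by
      induction k with
      | zero => simp
      | succ k ih =>
        rw [pow_succ, Real.rpow_mul hv.le, hstep _ (Real.rpow_pos_of_pos hv _), ih]
    have hlim : Tendsto (fun k : ℕ => v ^ (a / b) ^ k) atTop (𝓝 1) := by
      simpa [Function.comp_def] using (Real.continuousAt_const_rpow hv.ne').tendsto.comp
        (tendsto_pow_atTop_nhds_zero_of_lt_one (div_pos ha hb).le ((div_lt_one hb).2 hlt))
    exact tendsto_nhds_unique (tendsto_const_nhds.congr fun k => (hiter k).symm)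
      ((hf.tendsto 1).comp hlim)
  have hzero : f 0 = f 1 :=
    tendsto_nhds_unique ((hf.tendsto 0).mono_left (nhdsWithin_le_nhds (s := Ioi 0)))
      (tendsto_const_nhds.congr' (eventually_nhdsWithin_of_forall fun v hv => (hone v hv).symm))
  rcases hu.eq_or_lt with rfl | hu
  · rfl
  · rw [hone u hu, hzero]

section ShiftFunction

variable {Ω : Type*} [MeasurableSpace Ω] {P : Measure Ω} [IsProbabilityMeasure P]

lemma eq_of_identFDD_mulVec_add {T ι κ : Type*} [Fintype ι] [Fintype κ] {X : T → Ω → ι → ℝ}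
    (hX : ∀ t, Measurable (X t)) (M : Matrix κ ι ℝ) {a a' : T → κ → ℝ}
    (h : IdentFDD P (fun t ω => M *ᵥ X t ω + a t) (fun t ω => M *ᵥ X t ω + a' t)) : a = a' := by
  funext t
  have := Measure.isProbabilityMeasure_map (μ := P) (hX t).aemeasurable
  apply eq_of_map_mulVec_add_eq (P.map (X t)) M
  rw [Measure.map_map (measurable_mulVec_add _ _) (hX t),
    Measure.map_map (measurable_mulVec_add _ _) (hX t)]
  exact h.map_eq ((measurable_mulVec_add _ _).comp (hX t)) ((measurable_mulVec_add _ _).comp (hX t))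

lemma exists_const_identFDD_iff {T ι κ : Type*} [Fintype ι] [Fintype κ] {X : T → Ω → ι → ℝ}
    (hX : ∀ t, Measurable (X t)) (M : Matrix κ ι ℝ) {Y : T → Ω → κ → ℝ} {b : T → κ → ℝ}
    (h : IdentFDD P Y (fun t ω => M *ᵥ X t ω + b t)) :
    (∃ a, IdentFDD P Y (fun t ω => M *ᵥ X t ω + a)) ↔ ∃ a, ∀ t, b t = a := by
  constructor
  · rintro ⟨a, ha⟩
    exact ⟨a, congrFun (eq_of_identFDD_mulVec_add hX M fun k t => (h k t).symm.trans (ha k t))⟩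
  · rintro ⟨a, hb⟩
    obtain rfl : b = fun _ => a := funext hb
    exact ⟨a, h⟩

variable {d m : ℕ} {X : (Fin d → ℝ) → Ω → Fin m → ℝ} {E : Matrix (Fin d) (Fin d) ℝ}
  {D : Matrix (Fin m) (Fin m) ℝ} {b : ℝ → (Fin d → ℝ) → Fin m → ℝ}

lemma shift_mul_eq (hX : ∀ t, Measurable (X t))
    (hfdd : ∀ r, 0 < r → IdentFDD P (fun t ω => X (mpow r E *ᵥ t) ω)
      (fun t ω => mpow r D *ᵥ X t ω + b r t))
    {p s : ℝ} (hp : 0 < p) (hs : 0 < s) (t : Fin d → ℝ) :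
    b (p * s) t = mpow p D *ᵥ b s t + b p (mpow s E *ᵥ t) := by
  have hlaw : ∀ r, 0 < r → ∀ t, P.map (X (mpow r E *ᵥ t))
      = (P.map (X t)).map (fun x => mpow r D *ᵥ x + b r t) := fun r hr t => by
    rw [Measure.map_map (measurable_mulVec_add _ _) (hX t)]
    exact (hfdd r hr).map_eq (hX _) ((measurable_mulVec_add _ _).comp (hX t))
  have := Measure.isProbabilityMeasure_map (μ := P) (hX t).aemeasurable
  apply eq_of_map_mulVec_add_eq (P.map (X t)) (mpow (p * s) D)
  calc (P.map (X t)).map (fun x => mpow (p * s) D *ᵥ x + b (p * s) t)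
      = P.map (X (mpow p E *ᵥ (mpow s E *ᵥ t))) := by
        rw [← hlaw _ (mul_pos hp hs), mulVec_mulVec, mpow_mul E hp hs]
    _ = ((P.map (X t)).map (fun x => mpow s D *ᵥ x + b s t)).map
          (fun x => mpow p D *ᵥ x + b p (mpow s E *ᵥ t)) := by
        rw [hlaw p hp, hlaw s hs]
    _ = (P.map (X t)).map
          (fun x => mpow (p * s) D *ᵥ x + (mpow p D *ᵥ b s t + b p (mpow s E *ᵥ t))) := by
        rw [Measure.map_map (measurable_mulVec_add _ _) (measurable_mulVec_add _ _)]
        congr 1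
        funext x
        simp only [Function.comp_apply, mulVec_add, mulVec_mulVec, mpow_mul D hp hs, add_assoc]

lemma shift_eq_shift_zero_of_radial (hX : ∀ t, Measurable (X t))
    (hfdd : ∀ r, 0 < r → IdentFDD P (fun t ω => X (mpow r E *ᵥ t) ω)
      (fun t ω => mpow r D *ᵥ X t ω + b r t))
    {g : ℝ → ℝ → Fin m → ℝ} (hg : ∀ r, 0 < r → ∀ t, b r t = g r (euclNorm t))
    {lam₁ lam₂ : ℝ} (hlam₁ : 0 < lam₁) (hlam₂ : 0 < lam₂) (hne : lam₁ ≠ lam₂)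
    {ξ₁ ξ₂ : Fin d → ℝ} (hξ₁ : ξ₁ ≠ 0) (hξ₂ : ξ₂ ≠ 0)
    (hEξ₁ : E *ᵥ ξ₁ = lam₁ • ξ₁) (hEξ₂ : E *ᵥ ξ₂ = lam₂ • ξ₂)
    {r : ℝ} (hr : 0 < r) (hbr : Continuous (b r)) (t : Fin d → ℝ) : b r t = b r 0 := by
  have hrad : ∀ q, 0 < q → ∀ x y, euclNorm x = euclNorm y → b q x = b q y :=
    fun q hq x y hxy => by rw [hg q hq, hg q hq, hxy]
  obtain ⟨ζ, hEζ, hζ⟩ : ∃ ζ, E *ᵥ ζ = lam₂ • ζ ∧ euclNorm ζ = euclNorm ξ₁ :=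
    ⟨(euclNorm ξ₁ / euclNorm ξ₂) • ξ₂, by rw [mulVec_smul, hEξ₂, smul_comm], by
      rw [euclNorm_smul, abs_of_pos (div_pos (euclNorm_pos hξ₁) (euclNorm_pos hξ₂)),
        div_mul_cancel₀ _ (euclNorm_pos hξ₂).ne']⟩
  have hpow : ∀ s : ℝ, 0 < s → b r (s ^ lam₁ • ξ₁) = b r (s ^ lam₂ • ξ₁) := fun s hs => by
    have h₁ := shift_mul_eq hX hfdd hr hs ξ₁
    have h₂ := shift_mul_eq hX hfdd hr hs ζ
    rw [mpow_mulVec_of_mulVec_eq_smul hEξ₁ hs] at h₁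
    rw [mpow_mulVec_of_mulVec_eq_smul hEζ hs, hrad _ (mul_pos hr hs) ζ ξ₁ hζ,
      hrad s hs ζ ξ₁ hζ] at h₂
    rw [add_left_cancel (h₁.symm.trans h₂)]
    exact hrad r hr _ _ (by rw [euclNorm_smul, euclNorm_smul, hζ])
  have hnorm : 0 ≤ euclNorm t / euclNorm ξ₁ := div_nonneg (Real.sqrt_nonneg _) (euclNorm_pos hξ₁).le
  calc b r t = b r ((euclNorm t / euclNorm ξ₁) • ξ₁) := hrad r hr _ _ (by
        rw [euclNorm_smul, abs_of_nonneg hnorm, div_mul_cancel₀ _ (euclNorm_pos hξ₁).ne'])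
    _ = b r 0 := by
      simpa using apply_eq_apply_zero_of_comp_rpow_eq (f := fun u : ℝ => b r (u • ξ₁))
        (hbr.comp (continuous_id.smul continuous_const)) hlam₁ hlam₂ hne hpow hnorm

end ShiftFunction

theorem woss_hudson_mason_iff_radial_shift_general {d m : ℕ}
    {Ω : Type*} [MeasurableSpace Ω] (P : Measure Ω) [IsProbabilityMeasure P]
    (X : (Fin d → ℝ) → Ω → (Fin m → ℝ)) (hXmeas : ∀ t, Measurable (X t))
    (E : Matrix (Fin d) (Fin d) ℝ)
    (D : Matrix (Fin m) (Fin m) ℝ)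
    (b : ℝ → (Fin d → ℝ) → (Fin m → ℝ))
    (hbc : ∀ r : ℝ, 0 < r → ∀ t : Fin d → ℝ,
      ContinuousAt (fun p : ℝ × (Fin d → ℝ) => b p.1 p.2) (r, t))
    (hfdd : ∀ r : ℝ, 0 < r →
      IdentFDD P (fun t ω => X (mpow r E *ᵥ t) ω)
        (fun t ω => mpow r D *ᵥ X t ω + b r t))
    (lam₁ lam₂ : ℝ) (hlam₁ : 0 < lam₁) (hlam₂ : 0 < lam₂) (hne : lam₁ ≠ lam₂)
    (ξ₁ ξ₂ : Fin d → ℝ) (hξ₁ : ξ₁ ≠ 0) (hξ₂ : ξ₂ ≠ 0)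
    (hEξ₁ : E *ᵥ ξ₁ = lam₁ • ξ₁) (hEξ₂ : E *ᵥ ξ₂ = lam₂ • ξ₂) :
    (∀ r : ℝ, 0 < r → ∃ a : Fin m → ℝ,
      IdentFDD P (fun t ω => X (mpow r E *ᵥ t) ω)
        (fun t ω => mpow r D *ᵥ X t ω + a)) ↔
    (∃ g : ℝ → ℝ → (Fin m → ℝ), ∀ r : ℝ, 0 < r → ∀ t : Fin d → ℝ,
      b r t = g r (euclNorm t)) := by
  rw [forall₂_congr fun r hr => exists_const_identFDD_iff hXmeas _ (hfdd r hr)]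
  constructor
  · intro hconst
    choose! a ha using hconst
    exact ⟨fun r _ => a r, ha⟩
  · rintro ⟨g, hg⟩ r hr
    have hbr : Continuous (b r) := continuous_iff_continuousAt.2 fun t =>
      (hbc r hr t).comp (continuousAt_const.prodMk continuousAt_id)
    exact ⟨b r 0, shift_eq_shift_zero_of_radial hXmeas hfdd hg hlam₁ hlam₂ hne hξ₁ hξ₂ hEξ₁ hEξ₂
      hr hbr⟩

/-- **Proposition 3.1.** If `E` has two distinct positive eigenvalues (with real
eigenvectors), then an `(E,D)`-w.o.s.s. field is o.s.s. in the sense of Hudson and Mason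
iff `b_r(t)` depends only on `r` and `|t|`. -/
theorem woss_hudson_mason_iff_radial_shift {d m : ℕ} (hd : 2 ≤ d) (hm : 2 ≤ m)
    {Ω : Type*} [MeasurableSpace Ω] (P : Measure Ω) [IsProbabilityMeasure P]
    (X : (Fin d → ℝ) → Ω → (Fin m → ℝ)) (hXmeas : ∀ t, Measurable (X t))
    (E : Matrix (Fin d) (Fin d) ℝ) (hE : E ∈ QSet d)
    (hXc : StochContinuous P X) (hXp : ProperField P X)
    (D : Matrix (Fin m) (Fin m) ℝ) (hD : D ∈ MSet m)
    (b : ℝ → (Fin d → ℝ) → (Fin m → ℝ))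
    (hbc : ∀ r : ℝ, 0 < r → ∀ t : Fin d → ℝ,
      ContinuousAt (fun p : ℝ × (Fin d → ℝ) => b p.1 p.2) (r, t))
    (hfdd : ∀ r : ℝ, 0 < r →
      IdentFDD P (fun t ω => X (mpow r E *ᵥ t) ω)
        (fun t ω => mpow r D *ᵥ X t ω + b r t))
    (lam₁ lam₂ : ℝ) (hlam₁ : 0 < lam₁) (hlam₂ : 0 < lam₂) (hne : lam₁ ≠ lam₂)
    (ξ₁ ξ₂ : Fin d → ℝ) (hξ₁ : ξ₁ ≠ 0) (hξ₂ : ξ₂ ≠ 0)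
    (hEξ₁ : E *ᵥ ξ₁ = lam₁ • ξ₁) (hEξ₂ : E *ᵥ ξ₂ = lam₂ • ξ₂) :
    (∀ r : ℝ, 0 < r → ∃ a : Fin m → ℝ,
      IdentFDD P (fun t ω => X (mpow r E *ᵥ t) ω)
        (fun t ω => mpow r D *ᵥ X t ω + a)) ↔
    (∃ g : ℝ → ℝ → (Fin m → ℝ), ∀ r : ℝ, 0 < r → ∀ t : Fin d → ℝ,
      b r t = g r (euclNorm t)) :=
  woss_hudson_mason_iff_radial_shift_general P X hXmeas E D b hbc hfdd lam₁ lam₂ hlam₁ hlam₂ hne ξ₁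
    ξ₂ hξ₁ hξ₂ hEξ₁ hEξ₂
end

section
/- Let E ∈ Q(ℝ^d) and let τ be a radial part under E. Let φ : ℝ^d → [0,∞) be continuous, E-homogeneous, and satisfy φ(x) > 0 for all x ≠ 0. Then φ(0) = 0, the quantities M_φ := max_{θ∈Σ₀} φ(θ) and m_φ := min_{θ∈Σ₀} φ(θ) are finite and strictly positive, and m_φ τ(y) ≤ φ(y) ≤ M_φ τ(y) for all y ∈ ℝ^d. -/
open MeasureTheory Filter Matrix Topology Set
open scoped ENNReal NNReal

/-!
Writing a nonzero `y` as `(τ y)^E θ` with `θ := (τ y)^{-E} y ∈ Σ₀`, homogeneity gives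
`φ y = τ y · φ θ`, so the extrema of `φ` on the compact set `Σ₀` bound `φ / τ` away from the
origin. At the origin, `φ 0 = 0` follows from continuity, squeezing `φ` between `m_φ τ` and
`M_φ τ`, both of which tend to `0`.
-/

theorem mpow_mul_mpow_inv {n : ℕ} (r : ℝ) (A : Matrix (Fin n) (Fin n) ℝ) :
    mpow r A * mpow r⁻¹ A = 1 := by
  have h : Commute (Real.log r • A) (Real.log r⁻¹ • A) :=
    ((Commute.refl A).smul_left _).smul_right _
  rw [mpow, mpow, ← Matrix.exp_add_of_commute _ _ h,
    ← add_smul, Real.log_inv, add_neg_cancel, zero_smul, NormedSpace.exp_zero]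

theorem mpow_mulVec_mpow_inv_mulVec {n : ℕ} (r : ℝ) (A : Matrix (Fin n) (Fin n) ℝ)
    (x : Fin n → ℝ) : mpow r A *ᵥ (mpow r⁻¹ A *ᵥ x) = x := by
  rw [Matrix.mulVec_mulVec, mpow_mul_mpow_inv, Matrix.one_mulVec]

theorem eq_zero_of_squeeze_mul {X : Type*} [TopologicalSpace X] {x : X} [(𝓝[≠] x).NeBot]
    {f g : X → ℝ} (hf : ContinuousAt f x) (hg : Tendsto g (𝓝 x) (𝓝 0)) {m M : ℝ}
    (hlower : ∀ y ≠ x, m * g y ≤ f y) (hupper : ∀ y ≠ x, f y ≤ M * g y) : f x = 0 := by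
  have hmg : Tendsto (fun y => m * g y) (𝓝[≠] x) (𝓝 0) := by
    simpa using (hg.const_mul m).mono_left nhdsWithin_le_nhds
  have hMg : Tendsto (fun y => M * g y) (𝓝[≠] x) (𝓝 0) := by
    simpa using (hg.const_mul M).mono_left nhdsWithin_le_nhds
  exact tendsto_nhds_unique (hf.tendsto.mono_left nhdsWithin_le_nhds)
    (tendsto_of_tendsto_of_tendsto_of_le_of_le' hmg hMg
      (eventually_nhdsWithin_of_forall hlower) (eventually_nhdsWithin_of_forall hupper))

namespace IsRadialPart

variable {d : ℕ} {E : Matrix (Fin d) (Fin d) ℝ} {τ : (Fin d → ℝ) → ℝ}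

theorem ne_zero_of_mem_sphere (hτ : IsRadialPart E τ) {θ : Fin d → ℝ} (hθ : τ θ = 1) :
    θ ≠ 0 := by
  rintro rfl
  exact hτ.zero_not_mem hθ

theorem map_mpow_inv_mulVec_self (hτ : IsRadialPart E τ) {y : Fin d → ℝ} (hy : y ≠ 0) :
    τ (mpow (τ y)⁻¹ E *ᵥ y) = 1 := by
  have hr := hτ.pos y hy
  rw [hτ.scaling _ (inv_pos.mpr hr), inv_mul_cancel₀ hr.ne']

theorem sphere_nonempty [Nontrivial (Fin d → ℝ)] (hτ : IsRadialPart E τ) :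
    {x | τ x = 1}.Nonempty :=
  let ⟨_, hy⟩ := exists_ne (0 : Fin d → ℝ)
  ⟨_, hτ.map_mpow_inv_mulVec_self hy⟩

end IsRadialPart

namespace EHomogeneous

variable {d : ℕ} {E : Matrix (Fin d) (Fin d) ℝ} {τ φ : (Fin d → ℝ) → ℝ}

theorem eq_radialPart_mul (hφ : EHomogeneous E φ) (hτ : IsRadialPart E τ) {y : Fin d → ℝ}
    (hy : y ≠ 0) : φ y = τ y * φ (mpow (τ y)⁻¹ E *ᵥ y) := by
  have hθ := hτ.ne_zero_of_mem_sphere (hτ.map_mpow_inv_mulVec_self hy)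
  simpa only [mpow_mulVec_mpow_inv_mulVec] using hφ (τ y) (hτ.pos y hy) _ hθ

theorem le_mul_radialPart (hφ : EHomogeneous E φ) (hτ : IsRadialPart E τ) {M : ℝ}
    (hM : M ∈ upperBounds (φ '' {x | τ x = 1})) {y : Fin d → ℝ} (hy : y ≠ 0) :
    φ y ≤ M * τ y := by
  rw [hφ.eq_radialPart_mul hτ hy, mul_comm M]
  exact mul_le_mul_of_nonneg_left
    (hM (mem_image_of_mem φ (hτ.map_mpow_inv_mulVec_self hy))) (hτ.nonneg y)

theorem mul_radialPart_le (hφ : EHomogeneous E φ) (hτ : IsRadialPart E τ) {m : ℝ}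
    (hm : m ∈ lowerBounds (φ '' {x | τ x = 1})) {y : Fin d → ℝ} (hy : y ≠ 0) :
    m * τ y ≤ φ y := by
  rw [hφ.eq_radialPart_mul hτ hy, mul_comm m]
  exact mul_le_mul_of_nonneg_left
    (hm (mem_image_of_mem φ (hτ.map_mpow_inv_mulVec_self hy))) (hτ.nonneg y)

end EHomogeneous

theorem ehomogeneous_comparison_general {d : ℕ} (hd : 2 ≤ d)
    (E : Matrix (Fin d) (Fin d) ℝ)
    (τ : (Fin d → ℝ) → ℝ) (hτ : IsRadialPart E τ)
    (φ : (Fin d → ℝ) → ℝ) (hφc : Continuous φ)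
    (hφh : EHomogeneous E φ) (hφpos : ∀ x : Fin d → ℝ, x ≠ 0 → 0 < φ x) :
    φ 0 = 0 ∧
    ∃ Mφ mφ : ℝ,
      IsGreatest (φ '' {x : Fin d → ℝ | τ x = 1}) Mφ ∧
      IsLeast (φ '' {x : Fin d → ℝ | τ x = 1}) mφ ∧
      0 < mφ ∧ 0 < Mφ ∧
      ∀ y : Fin d → ℝ, mφ * τ y ≤ φ y ∧ φ y ≤ Mφ * τ y := by
  have : NeZero d := ⟨by omega⟩
  have hcompact := hτ.isCompact_sphere.image hφc
  have hne := hτ.sphere_nonempty.image φ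
  obtain ⟨Mφ, hM⟩ := hcompact.exists_isGreatest hne
  obtain ⟨mφ, hm⟩ := hcompact.exists_isLeast hne
  have hmpos : 0 < mφ := by
    obtain ⟨θ, hθ, rfl⟩ := hm.1
    exact hφpos θ (hτ.ne_zero_of_mem_sphere hθ)
  have hφ0 : φ 0 = 0 := eq_zero_of_squeeze_mul hφc.continuousAt hτ.tendsto_zero
    (fun _ => hφh.mul_radialPart_le hτ hm.2) (fun _ => hφh.le_mul_radialPart hτ hM.2)
  refine ⟨hφ0, Mφ, mφ, hM, hm, hmpos, hmpos.trans_le (hm.2 hM.1), fun y => ?_⟩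
  rcases eq_or_ne y 0 with rfl | hy
  · simp [hφ0, hτ.map_zero]
  · exact ⟨hφh.mul_radialPart_le hτ hm.2 hy, hφh.le_mul_radialPart hτ hM.2 hy⟩

/-- An `E`-homogeneous continuous function `φ`, positive off the origin, vanishes at `0`,
attains positive extrema `m_φ ≤ M_φ` on `Σ₀ = {τ = 1}`, and satisfies
`m_φ τ(y) ≤ φ(y) ≤ M_φ τ(y)`. -/
theorem ehomogeneous_comparison {d : ℕ} (hd : 2 ≤ d)
    (E : Matrix (Fin d) (Fin d) ℝ) (hE : E ∈ QSet d)
    (τ : (Fin d → ℝ) → ℝ) (hτ : IsRadialPart E τ)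
    (φ : (Fin d → ℝ) → ℝ) (hφc : Continuous φ) (hφnn : ∀ x, 0 ≤ φ x)
    (hφh : EHomogeneous E φ) (hφpos : ∀ x : Fin d → ℝ, x ≠ 0 → 0 < φ x) :
    φ 0 = 0 ∧
    ∃ Mφ mφ : ℝ,
      IsGreatest (φ '' {x : Fin d → ℝ | τ x = 1}) Mφ ∧
      IsLeast (φ '' {x : Fin d → ℝ | τ x = 1}) mφ ∧
      0 < mφ ∧ 0 < Mφ ∧
      ∀ y : Fin d → ℝ, mφ * τ y ≤ φ y ∧ φ y ≤ Mφ * τ y :=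
  ehomogeneous_comparison_general hd E τ hτ φ hφc hφh hφpos
end
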